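/- Fix a horizon T ∈ ℕ with T ≥ 1, d ∈ ℕ with d ≥ 1, reals α ≥ 0, C_x > 0, β ≥ max{1, C_x²}, Δ_max ≥ 0, and μ ∈ (0, 1). Suppose the frames {1, …, T} are partitioned into three disjoint sets R (regular sampling), N (non-sampling), and F (forced sampling); let M = |R ∪ F| ≤ T and let the sampling frames, listed in increasing order, have feature vectors x₁, …, x_M ∈ ℝ^d with ‖x_m‖₂ ≤ C_x, and set A₀ = β I_d, A_m = A_{m−1} + x_m x_mᵀ. Suppose the per-frame regrets r_t ≥ 0 satisfy: (i) for each t ∈ R with sampling index m, r_t ≤ 2α√(x_mᵀ A_{m−1}⁻¹ x_m); (ii) there is a map σ : N → {1, …, M} with |σ⁻¹(m)| ≤ T^μ for every m, and r_t ≤ 3α√(x_{σ(t)}ᵀ A_{σ(t)−1}⁻¹ x_{σ(t)}) for each t ∈ N; (iii) r_t ≤ Δ_max for each t ∈ F and |F| ≤ T^{1−μ}. Then the total regret satisfies Σ_{t=1}^T r_t ≤ (2 + 3T^μ) · α√(2Td(log(β + T C_x²/d) − log β)) + T^{1−μ} Δ_max. -/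

import Mathlib

open Matrix

/-- The design matrix after `m` samples: `A_m = βI_d + Σ_{s<m} x_s x_sᵀ`
(so `A_0 = βI_d` and `A_m = A_{m-1} + x_{m-1} x_{m-1}ᵀ`). -/
noncomputable def designMatrix {d : ℕ} (β : ℝ) (x : ℕ → Fin d → ℝ) (m : ℕ) :
    Matrix (Fin d) (Fin d) ℝ :=
  β • (1 : Matrix (Fin d) (Fin d) ℝ) + ∑ s ∈ Finset.range m, vecMulVec (x s) (x s)

/-!
Each regular sampling frame is charged to the width `√(x_mᵀ A_m⁻¹ x_m)` of its own sample, each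
non-sampling frame to the width of sample `σ t` (at most `T^μ` frames per sample), and each forced
frame costs at most `Δmax`. By Cauchy–Schwarz the widths sum to at most `√(T · Σ_m w_m)` with
`w_m = x_mᵀ A_m⁻¹ x_m`, and the elliptic potential argument bounds `Σ_m w_m`: as `β ≥ C_x²`, every
`w_m ≤ 1`, so `w_m ≤ 2 log(1 + w_m)`; the matrix determinant lemma telescopes `Σ_m log(1 + w_m)` to
`log det A_M − d log β`, and AM–GM on the eigenvalues of `A_M` gives
`log det A_M ≤ d log(tr A_M / d) ≤ d log(β + T C_x² / d)`.
-/

open Finset Real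

theorem Real.sum_log_le_card_mul_log_mean {ι : Type*} {s : Finset ι} (hs : s.Nonempty)
    {z : ι → ℝ} (hz : ∀ i ∈ s, 0 < z i) :
    ∑ i ∈ s, log (z i) ≤ #s * log ((∑ i ∈ s, z i) / #s) := by
  have hcard : (0 : ℝ) < #s := by exact_mod_cast hs.card_pos
  have hjensen := strictConcaveOn_log_Ioi.concaveOn.le_map_sum (t := s)
    (w := fun _ => (#s : ℝ)⁻¹) (p := z) (fun _ _ => by positivity)
    (by simp [hcard.ne']) hz
  simp only [smul_eq_mul, ← mul_sum] at hjensen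
  rw [div_eq_inv_mul]
  exact (inv_mul_le_iff₀ hcard).1 hjensen

theorem Matrix.PosDef.log_det_le {n : Type*} [Fintype n] [Nonempty n] [DecidableEq n]
    {A : Matrix n n ℝ} (hA : A.PosDef) :
    log A.det ≤ Fintype.card n * log (A.trace / Fintype.card n) := by
  rw [hA.isHermitian.det_eq_prod_eigenvalues, hA.isHermitian.trace_eq_sum_eigenvalues]
  simp only [RCLike.ofReal_real_eq_id, id]
  rw [log_prod fun i _ => (hA.eigenvalues_pos i).ne']
  exact sum_log_le_card_mul_log_mean univ_nonempty fun i _ => hA.eigenvalues_pos i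

theorem Matrix.dotProduct_inv_mulVec_le {n : Type*} [Fintype n] [DecidableEq n]
    {A : Matrix n n ℝ} (hA : IsUnit A.det) {β : ℝ} (hβ : 0 < β)
    (hlow : ∀ v, β * (v ⬝ᵥ v) ≤ v ⬝ᵥ A *ᵥ v) (u : n → ℝ) :
    u ⬝ᵥ A⁻¹ *ᵥ u ≤ (u ⬝ᵥ u) / β := by
  set y := A⁻¹ *ᵥ u
  have hAy : A *ᵥ y = u := by rw [mulVec_mulVec, mul_nonsing_inv A hA, one_mulVec]
  have hy : β * (y ⬝ᵥ y) ≤ u ⬝ᵥ y := by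
    simpa [hAy, dotProduct_comm y u] using hlow y
  have hcs : (u ⬝ᵥ y) ^ 2 ≤ (u ⬝ᵥ u) * (y ⬝ᵥ y) := by
    simpa [dotProduct, sq] using sum_mul_sq_le_sq_mul_sq univ u y
  have hyy : 0 ≤ y ⬝ᵥ y := dotProduct_self_star_nonneg y
  have huu : 0 ≤ u ⬝ᵥ u := dotProduct_self_star_nonneg u
  have hw : 0 ≤ u ⬝ᵥ y := (mul_nonneg hβ.le hyy).trans hy
  rw [le_div_iff₀ hβ]
  rcases hw.eq_or_lt with hw0 | hwpos
  · rwa [← hw0, zero_mul]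
  · refine le_of_mul_le_mul_left ?_ hwpos
    nlinarith [mul_le_mul_of_nonneg_left hy huu]

theorem le_two_mul_log_one_add {w : ℝ} (h0 : 0 ≤ w) (h1 : w ≤ 1) : w ≤ 2 * log (1 + w) := by
  have hlog := one_sub_inv_le_log_of_pos (by linarith : 0 < 1 + w)
  have hfrac : w / 2 ≤ 1 - (1 + w)⁻¹ := by
    field_simp
    nlinarith
  linarith

theorem Finset.sum_comp_le_mul_sum {ι κ : Type*} [Fintype κ] [DecidableEq κ] (s : Finset ι)
    (g : ι → κ) {f : κ → ℝ} (hf : ∀ k, 0 ≤ f k) {K : ℝ}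
    (hK : ∀ k, (#{t ∈ s | g t = k} : ℝ) ≤ K) :
    ∑ t ∈ s, f (g t) ≤ K * ∑ k, f k := by
  rw [← sum_fiberwise_of_maps_to (g := g) (t := univ) (fun _ _ => mem_univ _), mul_sum]
  refine sum_le_sum fun k _ => ?_
  calc ∑ t ∈ s with g t = k, f (g t) = ∑ t ∈ s with g t = k, f k :=
        sum_congr rfl fun t ht => congrArg f (mem_filter.1 ht).2
    _ = #{t ∈ s | g t = k} * f k := by rw [sum_const, nsmul_eq_mul]
    _ ≤ K * f k := mul_le_mul_of_nonneg_right (hK k) (hf k)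

theorem Finset.sum_le_univ_sum_of_subset_range {ι κ : Type*} [Fintype ι] {f : ι → κ}
    (hf : Function.Injective f) {s : Finset κ} (hs : ∀ t ∈ s, t ∈ Set.range f) {r : κ → ℝ}
    {b : ι → ℝ} (hb : ∀ i, 0 ≤ b i) (hr : ∀ i, f i ∈ s → r (f i) ≤ b i) :
    ∑ t ∈ s, r t ≤ ∑ i, b i := by
  rw [← sum_preimage f s hf.injOn r fun t ht hnot => absurd (hs t ht) hnot]
  calc ∑ i ∈ s.preimage f hf.injOn, r (f i) ≤ ∑ i ∈ s.preimage f hf.injOn, b i :=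
        sum_le_sum fun i hi => hr i (mem_preimage.1 hi)
    _ ≤ ∑ i, b i := sum_le_sum_of_subset_of_nonneg (subset_univ _) fun i _ _ => hb i

section DesignMatrix

variable {d : ℕ} {β : ℝ} (x : ℕ → Fin d → ℝ)

theorem posSemidef_sum_vecMulVec (m : ℕ) :
    (∑ s ∈ range m, vecMulVec (x s) (x s)).PosSemidef :=
  posSemidef_sum _ fun s _ => by simpa using posSemidef_vecMulVec_self_star (x s)

theorem posDef_designMatrix (hβ : 0 < β) (m : ℕ) : (designMatrix β x m).PosDef :=
  (PosDef.one.smul hβ).add_posSemidef (posSemidef_sum_vecMulVec x m)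

theorem smul_dotProduct_le_dotProduct_designMatrix_mulVec (m : ℕ) (v : Fin d → ℝ) :
    β * (v ⬝ᵥ v) ≤ v ⬝ᵥ designMatrix β x m *ᵥ v := by
  have hgram := (posSemidef_sum_vecMulVec x m).dotProduct_mulVec_nonneg v
  rw [star_trivial] at hgram
  simp only [designMatrix, add_mulVec, smul_mulVec, one_mulVec, dotProduct_add, dotProduct_smul,
    smul_eq_mul]
  linarith

theorem dotProduct_inv_designMatrix_mulVec_nonneg (hβ : 0 < β) (m : ℕ) (v : Fin d → ℝ) :
    0 ≤ v ⬝ᵥ (designMatrix β x m)⁻¹ *ᵥ v := by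
  simpa using (posDef_designMatrix x hβ m).inv.posSemidef.dotProduct_mulVec_nonneg v

theorem det_designMatrix_succ (hβ : 0 < β) (m : ℕ) :
    (designMatrix β x (m + 1)).det =
      (designMatrix β x m).det * (1 + x m ⬝ᵥ (designMatrix β x m)⁻¹ *ᵥ x m) := by
  have hA : IsUnit (designMatrix β x m).det := (posDef_designMatrix x hβ m).det_pos.ne'.isUnit
  have hsucc : designMatrix β x (m + 1) =
      designMatrix β x m + replicateCol Unit (x m) * replicateRow Unit (x m) := by
    rw [← vecMulVec_eq, designMatrix, designMatrix, sum_range_succ, add_assoc]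
  rw [hsucc, det_add_replicateCol_mul_replicateRow hA,
    det_unique (1 + replicateRow Unit (x m) * (designMatrix β x m)⁻¹ * replicateCol Unit (x m)),
    Matrix.add_apply, one_apply_eq, ← replicateRow_vecMul, replicateRow_mul_replicateCol_apply,
    dotProduct_mulVec]

theorem log_det_designMatrix (hβ : 0 < β) (M : ℕ) :
    log (designMatrix β x M).det =
      d * log β + ∑ m ∈ range M, log (1 + x m ⬝ᵥ (designMatrix β x m)⁻¹ *ᵥ x m) := by
  induction M with
  | zero => simp [designMatrix, log_pow]
  | succ M ih =>
    have hw := dotProduct_inv_designMatrix_mulVec_nonneg x hβ M (x M)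
    rw [det_designMatrix_succ x hβ, log_mul (posDef_designMatrix x hβ M).det_pos.ne'
      (add_pos_of_pos_of_nonneg one_pos hw).ne', ih, sum_range_succ, add_assoc]

theorem trace_designMatrix (M : ℕ) :
    (designMatrix β x M).trace = β * d + ∑ s ∈ range M, x s ⬝ᵥ x s := by
  simp [designMatrix, trace_sum, trace_vecMulVec]

theorem sum_dotProduct_inv_designMatrix_mulVec_le (hd : 1 ≤ d) {Cx : ℝ} (hβ1 : 1 ≤ β)
    (hβC : Cx ^ 2 ≤ β) {M : ℕ} (hx : ∀ m < M, x m ⬝ᵥ x m ≤ Cx ^ 2) :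
    ∑ m ∈ range M, x m ⬝ᵥ (designMatrix β x m)⁻¹ *ᵥ x m ≤
      2 * d * (log (β + M * Cx ^ 2 / d) - log β) := by
  have hβ : 0 < β := by linarith
  have hd0 : (0 : ℝ) < d := by exact_mod_cast hd
  have : NeZero d := ⟨by omega⟩
  set w : ℕ → ℝ := fun m => x m ⬝ᵥ (designMatrix β x m)⁻¹ *ᵥ x m
  have hw0 : ∀ m, 0 ≤ w m := fun m => dotProduct_inv_designMatrix_mulVec_nonneg x hβ m (x m)
  have hw1 : ∀ m < M, w m ≤ 1 := fun m hm =>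
    (dotProduct_inv_mulVec_le (posDef_designMatrix x hβ m).det_pos.ne'.isUnit hβ
      (smul_dotProduct_le_dotProduct_designMatrix_mulVec x m) (x m)).trans
      ((div_le_one hβ).2 ((hx m hm).trans hβC))
  have htrace : (designMatrix β x M).trace / d ≤ β + M * Cx ^ 2 / d := by
    have hsum : ∑ s ∈ range M, x s ⬝ᵥ x s ≤ M * Cx ^ 2 := by
      simpa using sum_le_card_nsmul _ _ _ fun s hs => hx s (mem_range.1 hs)
    rw [trace_designMatrix, add_div, mul_div_cancel_right₀ _ hd0.ne']
    gcongr
  have hlogdet : log (designMatrix β x M).det ≤ d * log (β + M * Cx ^ 2 / d) := by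
    have hA := posDef_designMatrix x hβ M
    have := hA.log_det_le
    rw [Fintype.card_fin] at this
    exact this.trans (mul_le_mul_of_nonneg_left
      (log_le_log (div_pos hA.trace_pos hd0) htrace) hd0.le)
  calc ∑ m ∈ range M, w m ≤ ∑ m ∈ range M, 2 * log (1 + w m) :=
        sum_le_sum fun m hm => le_two_mul_log_one_add (hw0 m) (hw1 m (mem_range.1 hm))
    _ = 2 * (log (designMatrix β x M).det - d * log β) := by
        rw [log_det_designMatrix x hβ, ← mul_sum]; ring
    _ ≤ 2 * d * (log (β + M * Cx ^ 2 / d) - log β) := by linarith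

theorem sum_sqrt_dotProduct_inv_designMatrix_mulVec_le (hd : 1 ≤ d) {Cx : ℝ} (hβ1 : 1 ≤ β)
    (hβC : Cx ^ 2 ≤ β) {M T : ℕ} (hMT : M ≤ T) (hx : ∀ m < M, x m ⬝ᵥ x m ≤ Cx ^ 2) :
    ∑ m : Fin M, √(x m ⬝ᵥ (designMatrix β x m)⁻¹ *ᵥ x m) ≤
      √(2 * T * d * (log (β + T * Cx ^ 2 / d) - log β)) := by
  have hβ : 0 < β := by linarith
  have hMT' : (M : ℝ) ≤ T := by exact_mod_cast hMT
  set w : ℕ → ℝ := fun m => x m ⬝ᵥ (designMatrix β x m)⁻¹ *ᵥ x m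
  have hw0 : ∀ m, 0 ≤ w m := fun m => dotProduct_inv_designMatrix_mulVec_nonneg x hβ m (x m)
  have hpotential : ∑ m : Fin M, w m ≤ 2 * d * (log (β + T * Cx ^ 2 / d) - log β) := by
    rw [Fin.sum_univ_eq_sum_range w]
    refine (sum_dotProduct_inv_designMatrix_mulVec_le x hd hβ1 hβC hx).trans ?_
    gcongr
  calc ∑ m : Fin M, √(w m) = ∑ m : Fin M, √1 * √(w m) := by simp
    _ ≤ √(∑ _m : Fin M, (1 : ℝ)) * √(∑ m : Fin M, w m) :=
        sum_sqrt_mul_sqrt_le _ (fun _ => zero_le_one) fun m => hw0 m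
    _ ≤ √T * √(2 * d * (log (β + T * Cx ^ 2 / d) - log β)) := by
        simp only [sum_const, card_univ, Fintype.card_fin, nsmul_eq_mul, mul_one]
        gcongr
    _ = √(2 * T * d * (log (β + T * Cx ^ 2 / d) - log β)) := by
        rw [← sqrt_mul (Nat.cast_nonneg T)]
        ring_nf

end DesignMatrix

theorem stmt_10_general {T d : ℕ} (hd : 1 ≤ d)
    (α Cx β Δmax μ : ℝ) (hα : 0 ≤ α)
    (hβ : β ≥ max 1 (Cx ^ 2)) (hΔ : 0 ≤ Δmax)
    (R N F : Finset ℕ)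
    (hRN : Disjoint R N) (hRF : Disjoint R F) (hNF : Disjoint N F)
    (hunion : R ∪ N ∪ F = Finset.Icc 1 T)
    (M : ℕ) (hMT : M ≤ T)
    (x : ℕ → Fin d → ℝ) (hx : ∀ m < M, Real.sqrt (x m ⬝ᵥ x m) ≤ Cx)
    (idx : Fin M → ℕ) (hmono : StrictMono idx)
    (hrange : ∀ t, t ∈ R ∪ F ↔ ∃ m, idx m = t)
    (r : ℕ → ℝ)
    -- (i) regular sampling frames
    (hR : ∀ m : Fin M, idx m ∈ R →
      r (idx m) ≤ 2 * α * Real.sqrt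
        (x m ⬝ᵥ (designMatrix β x m)⁻¹.mulVec (x m)))
    -- (ii) non-sampling frames
    (σ : ℕ → Fin M)
    (hσcard : ∀ m : Fin M, ((N.filter fun t => σ t = m).card : ℝ) ≤ (T : ℝ) ^ μ)
    (hN : ∀ t ∈ N, r t ≤ 3 * α * Real.sqrt
      (x (σ t) ⬝ᵥ (designMatrix β x (σ t))⁻¹.mulVec (x (σ t))))
    -- (iii) forced sampling frames
    (hF : ∀ t ∈ F, r t ≤ Δmax)
    (hFcard : (F.card : ℝ) ≤ (T : ℝ) ^ (1 - μ)) :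
    ∑ t ∈ Finset.Icc 1 T, r t ≤
      (2 + 3 * (T : ℝ) ^ μ) *
          (α * Real.sqrt (2 * T * d * (Real.log (β + T * Cx ^ 2 / d) - Real.log β))) +
        (T : ℝ) ^ (1 - μ) * Δmax := by
  set w : ℕ → ℝ := fun m => x m ⬝ᵥ (designMatrix β x m)⁻¹ *ᵥ x m
  set G := √(2 * T * d * (log (β + T * Cx ^ 2 / d) - log β))
  have hwidths : ∑ m : Fin M, √(w m) ≤ G :=
    sum_sqrt_dotProduct_inv_designMatrix_mulVec_le x hd (le_of_max_le_left hβ)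
      (le_of_max_le_right hβ) hMT fun m hm => (sqrt_le_iff.1 (hx m hm)).2
  have hRsum : ∑ t ∈ R, r t ≤ 2 * α * ∑ m : Fin M, √(w m) := by
    rw [mul_sum]
    exact sum_le_univ_sum_of_subset_range hmono.injective
      (fun t ht => (hrange t).1 (mem_union_left F ht)) (fun m => by positivity) hR
  have hNsum : ∑ t ∈ N, r t ≤ (T : ℝ) ^ μ * (3 * α * ∑ m : Fin M, √(w m)) := by
    rw [mul_sum]
    exact (sum_le_sum hN).trans (sum_comp_le_mul_sum N σ
      (f := fun m => 3 * α * √(w m)) (fun m => by positivity) hσcard)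
  have hFsum : ∑ t ∈ F, r t ≤ (T : ℝ) ^ (1 - μ) * Δmax := by
    refine (sum_le_card_nsmul F r Δmax hF).trans ?_
    rw [nsmul_eq_mul]
    exact mul_le_mul_of_nonneg_right hFcard hΔ
  have hαwidths : α * ∑ m : Fin M, √(w m) ≤ α * G := mul_le_mul_of_nonneg_left hwidths hα
  rw [← hunion, sum_union (disjoint_union_left.2 ⟨hRF, hNF⟩), sum_union hRN]
  linarith [mul_le_mul_of_nonneg_left hαwidths (rpow_nonneg (Nat.cast_nonneg T) μ)]

/-- Deterministic core of Theorem 1 (regret bound of μLinUCB): frames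
`{1, …, T}` are partitioned into regular sampling frames `R`, non-sampling
frames `N` and forced sampling frames `F`; the `M = |R ∪ F|` sampling frames,
enumerated in increasing order by `idx`, have contexts `x_1, …, x_M` (written
0-indexed: the `m`-th sample uses `A_m = βI + Σ_{s<m} x_s x_sᵀ`).  Under the
per-frame regret bounds (i)–(iii), the total regret is at most
`(2 + 3T^μ)·α√(2Td(log(β + TC_x²/d) − log β)) + T^{1−μ}·Δ_max`. -/
theorem stmt_10 {T d : ℕ} (hT : 1 ≤ T) (hd : 1 ≤ d)
    (α Cx β Δmax μ : ℝ) (hα : 0 ≤ α) (hCx : 0 < Cx)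
    (hβ : β ≥ max 1 (Cx ^ 2)) (hΔ : 0 ≤ Δmax) (hμ : μ ∈ Set.Ioo (0 : ℝ) 1)
    (R N F : Finset ℕ)
    (hRN : Disjoint R N) (hRF : Disjoint R F) (hNF : Disjoint N F)
    (hunion : R ∪ N ∪ F = Finset.Icc 1 T)
    (M : ℕ) (hM : (R ∪ F).card = M) (hMT : M ≤ T)
    (x : ℕ → Fin d → ℝ) (hx : ∀ m < M, Real.sqrt (x m ⬝ᵥ x m) ≤ Cx)
    (idx : Fin M → ℕ) (hmono : StrictMono idx)
    (hrange : ∀ t, t ∈ R ∪ F ↔ ∃ m, idx m = t)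
    (r : ℕ → ℝ) (hr0 : ∀ t ∈ Finset.Icc 1 T, 0 ≤ r t)
    -- (i) regular sampling frames
    (hR : ∀ m : Fin M, idx m ∈ R →
      r (idx m) ≤ 2 * α * Real.sqrt
        (x m ⬝ᵥ (designMatrix β x m)⁻¹.mulVec (x m)))
    -- (ii) non-sampling frames
    (σ : ℕ → Fin M)
    (hσcard : ∀ m : Fin M, ((N.filter fun t => σ t = m).card : ℝ) ≤ (T : ℝ) ^ μ)
    (hN : ∀ t ∈ N, r t ≤ 3 * α * Real.sqrt
      (x (σ t) ⬝ᵥ (designMatrix β x (σ t))⁻¹.mulVec (x (σ t))))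
    -- (iii) forced sampling frames
    (hF : ∀ t ∈ F, r t ≤ Δmax)
    (hFcard : (F.card : ℝ) ≤ (T : ℝ) ^ (1 - μ)) :
    ∑ t ∈ Finset.Icc 1 T, r t ≤
      (2 + 3 * (T : ℝ) ^ μ) *
          (α * Real.sqrt (2 * T * d * (Real.log (β + T * Cx ^ 2 / d) - Real.log β))) +
        (T : ℝ) ^ (1 - μ) * Δmax :=
  stmt_10_general hd α Cx β Δmax μ hα hβ hΔ R N F hRN hRF hNF hunion M hMT x hx idx hmono hrange r
    hR σ hσcard hN hF hFcard
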